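/- For a continuous map f on a compact metric space X and any integer k ≥ 1, the polynomial entropy of f^k equals the polynomial entropy of f. -/
import Mathlib


open Filter Topology Set

section PolEnt

variable {X : Type*} [MetricSpace X]

/-- `E` is `(n,ε)`-separated for the dynamic metric of `f`. -/
def IsDynSep (f : X → X) (n : ℕ) (ε : ℝ) (E : Set X) : Prop :=
  ∀ x ∈ E, ∀ y ∈ E, x ≠ y → ∃ j < n, ε ≤ dist (f^[j] x) (f^[j] y)

/-- Maximal cardinality of an `(n,ε)`-separated set contained in `Y`. -/
noncomputable def dynSepMax (f : X → X) (Y : Set X) (n : ℕ) (ε : ℝ) : ℕ :=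
  sSup {k | ∃ E : Finset X, ↑E ⊆ Y ∧ IsDynSep f n ε ↑E ∧ E.card = k}

/-- Polynomial entropy of `f` on the set `Y`:
`lim_{ε→0} limsup_n log S(n,ε;Y)/log n`, expressed as a supremum over `ε > 0`
(the function is antitone in `ε`, so the limit as `ε → 0⁺` is this supremum). -/
noncomputable def polEntropyOn (f : X → X) (Y : Set X) : ENNReal :=
  ⨆ (ε : ℝ) (_ : 0 < ε),
    Filter.limsup (fun n : ℕ =>
      ENNReal.ofReal (Real.log (dynSepMax f Y n ε) / Real.log n)) Filter.atTop

/-- Polynomial entropy of `f`. -/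
noncomputable def polEntropy (f : X → X) : ENNReal := polEntropyOn f Set.univ

end PolEnt

section Aux

variable {X : Type*} [MetricSpace X]

/-- In a compact space, cardinalities of `(n,ε)`-separated sets are bounded. -/
lemma bddAbove_dynSep_card [CompactSpace X] (f : X → X) (Y : Set X) (n : ℕ) {ε : ℝ}
    (hε : 0 < ε) :
    BddAbove {k | ∃ E : Finset X, ↑E ⊆ Y ∧ IsDynSep f n ε ↑E ∧ E.card = k} := by
  set G : X → (Fin n → X) := fun x j => f^[(j : ℕ)] x with hG
  obtain ⟨t, htfin, htcov⟩ :=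
    Metric.totallyBounded_iff.1 (isCompact_univ (X := Fin n → X)).totallyBounded
      (ε / 2) (by linarith)
  refine ⟨htfin.toFinset.card, ?_⟩
  rintro m ⟨E, -, hsep, rfl⟩
  have hmem : ∀ x : X, ∃ c ∈ htfin.toFinset, G x ∈ Metric.ball c (ε / 2) := by
    intro x
    have := htcov (mem_univ (G x))
    simp only [mem_iUnion] at this
    obtain ⟨c, hc, hxc⟩ := this
    exact ⟨c, htfin.mem_toFinset.2 hc, hxc⟩
  choose φ hφt hφball using hmem
  refine Finset.card_le_card_of_injOn φ (fun x _ => hφt x) ?_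
  intro x hx y hy hxy
  by_contra hne
  obtain ⟨j, hj, hdist⟩ := hsep x hx y hy hne
  have h1 : dist (G x) (G y) < ε := by
    calc dist (G x) (G y) ≤ dist (G x) (φ x) + dist (φ x) (G y) := dist_triangle _ _ _
      _ < ε / 2 + ε / 2 := by
          refine add_lt_add (Metric.mem_ball.1 (hφball x)) ?_
          rw [dist_comm, hxy]
          exact Metric.mem_ball.1 (hφball y)
      _ = ε := by ring
  have h2 : ε ≤ dist (G x) (G y) := le_trans hdist (dist_le_pi_dist (G x) (G y) ⟨j, hj⟩)
  linarith

lemma dynSepMax_le_dynSepMax [CompactSpace X] {f g : X → X} {Y : Set X} {n m : ℕ} {ε δ : ℝ}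
    (hδ : 0 < δ)
    (h : ∀ E : Finset X, IsDynSep f n ε ↑E → IsDynSep g m δ ↑E) :
    dynSepMax f Y n ε ≤ dynSepMax g Y m δ := by
  refine csSup_le_csSup (bddAbove_dynSep_card g Y m hδ) ?_ ?_
  · exact ⟨0, ⟨∅, by simp, by intro x hx; simp at hx, by simp⟩⟩
  · rintro k ⟨E, hE, hsep, rfl⟩
    exact ⟨E, hE, h E hsep, rfl⟩

/-- Key analytic lemma: if `a n ≤ b (c n)` with `c n ≲ K n`, `c → ∞`, then
`limsup log a n / log n ≤ limsup log b n / log n`. -/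
lemma limsup_log_div_le {a b c : ℕ → ℕ} {K : ℕ}
    (hc : Tendsto c atTop atTop) (hcK : ∀ᶠ n in atTop, c n ≤ K * n)
    (hab : ∀ n, a n ≤ b (c n)) :
    limsup (fun n : ℕ => ENNReal.ofReal (Real.log (a n) / Real.log n)) atTop ≤
      limsup (fun n : ℕ => ENNReal.ofReal (Real.log (b n) / Real.log n)) atTop := by
  set v : ℕ → ENNReal := fun n => ENNReal.ofReal (Real.log (b n) / Real.log n) with hv
  set L := limsup v atTop with hL
  have key : ∀ η : ℝ, 0 < η →
      limsup (fun n : ℕ => ENNReal.ofReal (Real.log (a n) / Real.log n)) atTop ≤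
        ENNReal.ofReal (1 + η) * L := by
    intro η hη
    have hev : ∀ᶠ n : ℕ in atTop,
        ENNReal.ofReal (Real.log (a n) / Real.log n) ≤
          ENNReal.ofReal (1 + η) * v (c n) := by
      have h1 : ∀ᶠ n : ℕ in atTop, (2 : ℕ) ≤ c n := hc.eventually_ge_atTop 2
      have h2 : ∀ᶠ n : ℕ in atTop, Real.log (K : ℝ) ≤ η * Real.log n := by
        have : Tendsto (fun n : ℕ => η * Real.log n) atTop atTop :=
          (Real.tendsto_log_atTop.comp tendsto_natCast_atTop_atTop).const_mul_atTop hη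
        exact this.eventually_ge_atTop _
      filter_upwards [h1, h2, hcK, eventually_ge_atTop 2] with n hcn hlog hKn hn2
      have hn1 : (1 : ℝ) < (n : ℝ) := by exact_mod_cast hn2
      have hlogn : 0 < Real.log n := Real.log_pos hn1
      have hcn1 : (1 : ℝ) < (c n : ℝ) := by exact_mod_cast hcn
      have hlogcn : 0 < Real.log (c n) := Real.log_pos hcn1
      have hK1 : 1 ≤ K := by
        rcases Nat.eq_zero_or_pos K with h | h
        · exfalso; rw [h, Nat.zero_mul] at hKn; omega
        · exact h
      have hKR : (1 : ℝ) ≤ (K : ℝ) := by exact_mod_cast hK1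
      have hbound : Real.log (c n) ≤ (1 + η) * Real.log n := by
        have h3 : Real.log ((c n : ℕ) : ℝ) ≤ Real.log (((K * n : ℕ) : ℕ) : ℝ) :=
          Real.log_le_log (by positivity) (by exact_mod_cast hKn)
        have h4 : Real.log (((K * n : ℕ) : ℕ) : ℝ) = Real.log K + Real.log n := by
          push_cast
          exact Real.log_mul (by linarith) (by linarith)
        rw [h4] at h3
        nlinarith
      have hlogb : 0 ≤ Real.log (b (c n)) := Real.log_natCast_nonneg _
      have hloga : 0 ≤ Real.log (a n) := Real.log_natCast_nonneg _
      have hlogab : Real.log (a n) ≤ Real.log (b (c n)) := by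
        rcases Nat.eq_zero_or_pos (a n) with h | h
        · simpa [h] using hlogb
        · exact Real.log_le_log (by exact_mod_cast h) (by exact_mod_cast hab n)
      have h5 : 1 / Real.log n ≤ (1 + η) / Real.log (c n) := by
        rw [div_le_div_iff₀ hlogn hlogcn]
        nlinarith
      have hreal : Real.log (a n) / Real.log n ≤
          (1 + η) * (Real.log (b (c n)) / Real.log (c n)) := by
        calc Real.log (a n) / Real.log n = Real.log (a n) * (1 / Real.log n) := by ring
          _ ≤ Real.log (b (c n)) * ((1 + η) / Real.log (c n)) :=
              mul_le_mul hlogab h5 (by positivity) hlogb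
          _ = (1 + η) * (Real.log (b (c n)) / Real.log (c n)) := by ring
      calc ENNReal.ofReal (Real.log (a n) / Real.log n)
          ≤ ENNReal.ofReal ((1 + η) * (Real.log (b (c n)) / Real.log (c n))) :=
            ENNReal.ofReal_le_ofReal hreal
        _ = ENNReal.ofReal (1 + η) * v (c n) := by
            rw [ENNReal.ofReal_mul (by linarith)]
    calc limsup (fun n : ℕ => ENNReal.ofReal (Real.log (a n) / Real.log n)) atTop
        ≤ limsup (fun n => ENNReal.ofReal (1 + η) * v (c n)) atTop :=
          limsup_le_limsup hev
      _ = ENNReal.ofReal (1 + η) * limsup (fun n => v (c n)) atTop :=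
          ENNReal.limsup_const_mul_of_ne_top (by simp)
      _ ≤ ENNReal.ofReal (1 + η) * L := by
          gcongr
          calc limsup (fun n => v (c n)) atTop = limsup v (map c atTop) :=
                Filter.limsup_comp v c atTop
            _ ≤ limsup v atTop := limsup_le_limsup_of_le hc
  refine ENNReal.le_of_forall_pos_le_add fun ε' hε' hLtop => ?_
  set Lr := L.toReal with hLr
  have hLr0 : 0 ≤ Lr := ENNReal.toReal_nonneg
  have hLeq : L = ENNReal.ofReal Lr := (ENNReal.ofReal_toReal hLtop.ne).symm
  have hηpos : (0 : ℝ) < (ε' : ℝ) / (Lr + 1) := by positivity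
  refine le_trans (key _ hηpos) ?_
  have hmul : ((ε' : ℝ) / (Lr + 1)) * Lr ≤ (ε' : ℝ) := by
    rw [div_mul_eq_mul_div, div_le_iff₀ (by linarith)]
    nlinarith [NNReal.coe_nonneg ε']
  calc ENNReal.ofReal (1 + (ε' : ℝ) / (Lr + 1)) * L
      = ENNReal.ofReal ((1 + (ε' : ℝ) / (Lr + 1)) * Lr) := by
        rw [hLeq, ← ENNReal.ofReal_mul (by positivity)]
    _ = ENNReal.ofReal (Lr + ((ε' : ℝ) / (Lr + 1)) * Lr) := by ring_nf
    _ ≤ ENNReal.ofReal Lr + ENNReal.ofReal (((ε' : ℝ) / (Lr + 1)) * Lr) :=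
        ENNReal.ofReal_add_le
    _ ≤ L + (ε' : ENNReal) := by
        rw [hLeq]
        gcongr
        calc ENNReal.ofReal (((ε' : ℝ) / (Lr + 1)) * Lr) ≤ ENNReal.ofReal (ε' : ℝ) :=
              ENNReal.ofReal_le_ofReal hmul
          _ = (ε' : ENNReal) := ENNReal.ofReal_coe_nnreal

end Aux

/-- For a continuous map `f` on a compact metric space and `k ≥ 1`,
`h_pol(f^k) = h_pol(f)`. -/
theorem polEntropy_iterate {X : Type*} [MetricSpace X] [CompactSpace X]
    (f : X → X) (hf : Continuous f) (k : ℕ) (hk : 1 ≤ k) :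
    polEntropy (f^[k]) = polEntropy f := by
  have hk0 : 0 < k := hk
  apply le_antisymm
  · -- h_pol(f^k) ≤ h_pol(f)
    refine iSup₂_le fun ε hε => ?_
    have hcard : ∀ n : ℕ, dynSepMax (f^[k]) Set.univ n ε ≤ dynSepMax f Set.univ (k * n) ε := by
      intro n
      refine dynSepMax_le_dynSepMax hε fun E hsep => ?_
      intro x hx y hy hxy
      obtain ⟨j, hj, hd⟩ := hsep x hx y hy hxy
      refine ⟨k * j, by exact (Nat.mul_lt_mul_left hk0).2 hj, ?_⟩
      rwa [Function.iterate_mul]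
    have hc : Tendsto (fun n : ℕ => k * n) atTop atTop :=
      tendsto_atTop_mono (fun n => Nat.le_mul_of_pos_left n hk0) tendsto_id
    have hmain := limsup_log_div_le (a := fun n => dynSepMax (f^[k]) Set.univ n ε)
      (b := fun n => dynSepMax f Set.univ n ε) (c := fun n => k * n) (K := k)
      hc (Eventually.of_forall fun n => le_rfl) hcard
    refine le_trans hmain ?_
    exact le_iSup₂ (f := fun (ε : ℝ) (_ : 0 < ε) =>
      limsup (fun n : ℕ =>
        ENNReal.ofReal (Real.log (dynSepMax f Set.univ n ε) / Real.log n)) atTop) ε hε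
  · -- h_pol(f) ≤ h_pol(f^k)
    refine iSup₂_le fun ε hε => ?_
    -- uniform continuity: get δ
    have hG : Continuous fun x : X => (fun r : Fin k => f^[(r : ℕ)] x) :=
      continuous_pi fun r => hf.iterate _
    have hUC := CompactSpace.uniformContinuous_of_continuous hG
    obtain ⟨δ, hδ, hδε⟩ := Metric.uniformContinuous_iff.1 hUC ε hε
    have hδ' : ∀ x y : X, dist x y < δ → ∀ r < k, dist (f^[r] x) (f^[r] y) < ε := by
      intro x y hxy r hr
      have := hδε hxy
      exact lt_of_le_of_lt
        (dist_le_pi_dist (fun s : Fin k => f^[(s : ℕ)] x)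
          (fun s : Fin k => f^[(s : ℕ)] y) ⟨r, hr⟩) this
    have hcard : ∀ n : ℕ,
        dynSepMax f Set.univ n ε ≤ dynSepMax (f^[k]) Set.univ (n / k + 1) δ := by
      intro n
      refine dynSepMax_le_dynSepMax hδ fun E hsep => ?_
      intro x hx y hy hxy
      obtain ⟨j, hj, hd⟩ := hsep x hx y hy hxy
      refine ⟨j / k, by
        have : j / k ≤ n / k := Nat.div_le_div_right hj.le
        omega, ?_⟩
      by_contra hlt
      push_neg at hlt
      have hr : j % k < k := Nat.mod_lt _ hk0
      have := hδ' _ _ (by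
        rwa [← Function.iterate_mul] at hlt) (j % k) hr
      rw [← Function.iterate_add_apply, ← Function.iterate_add_apply] at this
      rw [Nat.mod_add_div j k] at this
      linarith
    have hc : Tendsto (fun n : ℕ => n / k + 1) atTop atTop := by
      refine tendsto_atTop_atTop.2 fun b => ⟨b * k, fun n hn => ?_⟩
      have : b ≤ n / k := (Nat.le_div_iff_mul_le hk0).2 hn
      omega
    have hcK : ∀ᶠ n : ℕ in atTop, n / k + 1 ≤ 2 * n := by
      filter_upwards [eventually_ge_atTop 1] with n hn
      have : n / k ≤ n := Nat.div_le_self n k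
      omega
    have hmain := limsup_log_div_le (a := fun n => dynSepMax f Set.univ n ε)
      (b := fun n => dynSepMax (f^[k]) Set.univ n δ) (c := fun n => n / k + 1) (K := 2)
      hc hcK hcard
    refine le_trans hmain ?_
    exact le_iSup₂ (f := fun (ε : ℝ) (_ : 0 < ε) =>
      limsup (fun n : ℕ =>
        ENNReal.ofReal (Real.log (dynSepMax (f^[k]) Set.univ n ε) / Real.log n)) atTop) δ hδ
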